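/- arXiv:1701.01598 — 4 statements merged into one kernel-verified Lean document; each statement's English description precedes it below -/
import Mathlib

section
/- Let $Q$ be a reversible Markov operator on a finite state space $V$ with stationary measure $\pi$ (i.e., $q(x,y) := \pi(x) Q(x,y)$ is symmetric, nonnegative, with $\sum_y Q(x,y) = 1$). Then for any function $\psi : V \to [0,1]$ with $\|\psi\|_\pi > 0$, there exists a threshold $h \in (0,1)$ such that the level set $S_h = \{x \in V : \psi(x)^2 \geq h\}$ satisfies $\frac{\langle \mathbf{1}_{S_h}, (I-Q)\mathbf{1}_{S_h}\rangle_\pi}{\pi(S_h)} \leq \sqrt{2\, \frac{\langle \psi, (I-Q)\psi\rangle_\pi}{\|\psi\|_\pi^2}}$. -/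
/-!
Write `q(x, y) = π(x) Q(x, y)` for the (symmetric) edge measure, `g = ψ²`, `A = ‖ψ‖²_π` and
`E = ⟨ψ, (I - Q)ψ⟩_π = ½ ∑ q (ψ x - ψ y)²`. For an indicator, `⟨1_S, (I - Q)1_S⟩_π` is
`π(S) - ∑ q 1_S(x) 1_S(y)`, and since `∫₀^M 1[h ≤ c] dh = c`, integrating over the threshold `h`
gives `∫ π(S_h) dh = A` and `∫ ⟨1_{S_h}, (I - Q)1_{S_h}⟩_π dh = ∑ q (g x - min (g x) (g y))
= ½ ∑ q |ψ x² - ψ y²|`. Cauchy–Schwarz bounds the latter by `½ √(2E) √(4A) = √(2E/A) · A`, so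
the integrand `⟨1_{S_h}, (I - Q)1_{S_h}⟩_π - √(2E/A) π(S_h)` has nonpositive integral over
`(0, max g)` and is therefore nonpositive at some threshold, where `S_h` is nonempty.
-/

open Finset
open MeasureTheory

section

variable {V : Type*} {π : V → ℝ} {Q : Matrix V V ℝ}

def edgeMeasure (π : V → ℝ) (Q : Matrix V V ℝ) (e : V × V) : ℝ := π e.1 * Q e.1 e.2

lemma edgeMeasure_nonneg (hπ : ∀ x, 0 ≤ π x) (hQ : ∀ x y, 0 ≤ Q x y) (e : V × V) :
    0 ≤ edgeMeasure π Q e :=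
  mul_nonneg (hπ _) (hQ _ _)

lemma edgeMeasure_swap (hrev : ∀ x y, π x * Q x y = π y * Q y x) (e : V × V) :
    edgeMeasure π Q e.swap = edgeMeasure π Q e :=
  (hrev _ _).symm

variable [Fintype V]

def dirichletForm (π : V → ℝ) (Q : Matrix V V ℝ) (f : V → ℝ) : ℝ :=
  ∑ x, π x * f x * (f x - ∑ y, Q x y * f y)

lemma sum_edgeMeasure_mul_fst (hQrow : ∀ x, ∑ y, Q x y = 1) (u : V → ℝ) :
    ∑ e, edgeMeasure π Q e * u e.1 = ∑ x, π x * u x := by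
  rw [Fintype.sum_prod_type]
  refine sum_congr rfl fun x _ => ?_
  simp only [edgeMeasure, ← sum_mul, ← mul_sum, hQrow, mul_one]

lemma sum_edgeMeasure_mul_snd (hQrow : ∀ x, ∑ y, Q x y = 1)
    (hrev : ∀ x y, π x * Q x y = π y * Q y x) (u : V → ℝ) :
    ∑ e, edgeMeasure π Q e * u e.2 = ∑ x, π x * u x := by
  rw [← sum_edgeMeasure_mul_fst hQrow u, ← (Equiv.prodComm V V).sum_comp]
  simp only [Equiv.prodComm_apply, edgeMeasure_swap hrev, Prod.snd_swap]

lemma dirichletForm_eq_sub_sum_edgeMeasure (f : V → ℝ) :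
    dirichletForm π Q f = ∑ x, π x * f x ^ 2 - ∑ e, edgeMeasure π Q e * (f e.1 * f e.2) := by
  rw [dirichletForm, Fintype.sum_prod_type, ← sum_sub_distrib]
  refine sum_congr rfl fun x _ => ?_
  rw [mul_sub, mul_sum]
  congr 1
  · ring
  · exact sum_congr rfl fun y _ => by simp only [edgeMeasure]; ring

lemma two_mul_dirichletForm (hQrow : ∀ x, ∑ y, Q x y = 1)
    (hrev : ∀ x y, π x * Q x y = π y * Q y x) (f : V → ℝ) :
    2 * dirichletForm π Q f = ∑ e, edgeMeasure π Q e * (f e.1 - f e.2) ^ 2 := by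
  have expand : ∀ e : V × V, edgeMeasure π Q e * (f e.1 - f e.2) ^ 2 =
      edgeMeasure π Q e * f e.1 ^ 2 + edgeMeasure π Q e * f e.2 ^ 2
        - 2 * (edgeMeasure π Q e * (f e.1 * f e.2)) := fun e => by ring
  simp only [expand, sum_sub_distrib, sum_add_distrib, ← mul_sum,
    sum_edgeMeasure_mul_fst hQrow (f · ^ 2), sum_edgeMeasure_mul_snd hQrow hrev (f · ^ 2),
    dirichletForm_eq_sub_sum_edgeMeasure]
  ring

lemma sum_edgeMeasure_mul_add_sq_le (hπ : ∀ x, 0 ≤ π x) (hQ : ∀ x y, 0 ≤ Q x y)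
    (hQrow : ∀ x, ∑ y, Q x y = 1) (hrev : ∀ x y, π x * Q x y = π y * Q y x) (f : V → ℝ) :
    ∑ e, edgeMeasure π Q e * (f e.1 + f e.2) ^ 2 ≤ 4 * ∑ x, π x * f x ^ 2 :=
  calc ∑ e, edgeMeasure π Q e * (f e.1 + f e.2) ^ 2
      ≤ ∑ e, (2 * (edgeMeasure π Q e * f e.1 ^ 2) + 2 * (edgeMeasure π Q e * f e.2 ^ 2)) :=
        sum_le_sum fun e _ => by
          nlinarith [mul_nonneg (edgeMeasure_nonneg hπ hQ e) (sq_nonneg (f e.1 - f e.2))]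
    _ = 4 * ∑ x, π x * f x ^ 2 := by
        rw [sum_add_distrib, ← mul_sum, ← mul_sum, sum_edgeMeasure_mul_fst hQrow (f · ^ 2),
          sum_edgeMeasure_mul_snd hQrow hrev (f · ^ 2)]
        ring

-- Cauchy–Schwarz after factoring `f x ^ 2 - f y ^ 2 = (f x - f y) (f x + f y)`.
lemma sq_sum_edgeMeasure_mul_abs_sq_sub_sq_le (hπ : ∀ x, 0 ≤ π x) (hQ : ∀ x y, 0 ≤ Q x y)
    (hQrow : ∀ x, ∑ y, Q x y = 1) (hrev : ∀ x y, π x * Q x y = π y * Q y x) (f : V → ℝ) :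
    (∑ e, edgeMeasure π Q e * |f e.1 ^ 2 - f e.2 ^ 2|) ^ 2 ≤
      8 * dirichletForm π Q f * ∑ x, π x * f x ^ 2 := by
  have hq := edgeMeasure_nonneg hπ hQ
  have hD : 0 ≤ 2 * dirichletForm π Q f := by
    rw [two_mul_dirichletForm hQrow hrev]
    exact sum_nonneg fun e _ => mul_nonneg (hq e) (sq_nonneg _)
  calc (∑ e, edgeMeasure π Q e * |f e.1 ^ 2 - f e.2 ^ 2|) ^ 2
      ≤ (∑ e, edgeMeasure π Q e * (f e.1 - f e.2) ^ 2) *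
          ∑ e, edgeMeasure π Q e * (f e.1 + f e.2) ^ 2 :=
        sum_sq_le_sum_mul_sum_of_sq_le_mul _ (fun e _ => mul_nonneg (hq e) (sq_nonneg _))
          (fun e _ => mul_nonneg (hq e) (sq_nonneg _))
          fun e _ => le_of_eq <| by rw [mul_pow, sq_abs]; ring
    _ ≤ 2 * dirichletForm π Q f * (4 * ∑ x, π x * f x ^ 2) := by
        rw [← two_mul_dirichletForm hQrow hrev]
        exact mul_le_mul_of_nonneg_left (sum_edgeMeasure_mul_add_sq_le hπ hQ hQrow hrev f) hD
    _ = 8 * dirichletForm π Q f * ∑ x, π x * f x ^ 2 := by ring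

lemma sum_edgeMeasure_mul_abs_sq_sub_sq_div_two_le (hπ : ∀ x, 0 ≤ π x)
    (hQ : ∀ x y, 0 ≤ Q x y) (hQrow : ∀ x, ∑ y, Q x y = 1)
    (hrev : ∀ x y, π x * Q x y = π y * Q y x) (f : V → ℝ) (hf : 0 < ∑ x, π x * f x ^ 2) :
    (∑ e, edgeMeasure π Q e * |f e.1 ^ 2 - f e.2 ^ 2|) / 2 ≤
      Real.sqrt (2 * dirichletForm π Q f / ∑ x, π x * f x ^ 2) * ∑ x, π x * f x ^ 2 := by
  set A := ∑ x, π x * f x ^ 2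
  have hS : 0 ≤ ∑ e, edgeMeasure π Q e * |f e.1 ^ 2 - f e.2 ^ 2| :=
    sum_nonneg fun e _ => mul_nonneg (edgeMeasure_nonneg hπ hQ e) (abs_nonneg _)
  have hCS := sq_sum_edgeMeasure_mul_abs_sq_sub_sq_le hπ hQ hQrow hrev f
  have hsqrt : Real.sqrt (2 * dirichletForm π Q f / A) * A =
      Real.sqrt (2 * dirichletForm π Q f * A) :=
    calc Real.sqrt (2 * dirichletForm π Q f / A) * A
        = Real.sqrt (2 * dirichletForm π Q f / A) * Real.sqrt (A ^ 2) := by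
          rw [Real.sqrt_sq hf.le]
      _ = Real.sqrt (2 * dirichletForm π Q f * A) := by
          rw [← Real.sqrt_mul' _ (sq_nonneg _)]
          congr 1
          field_simp
  rw [hsqrt]
  exact Real.le_sqrt_of_sq_le (by nlinarith)

section Coarea

lemma ite_le_eq_indicator_Iic (c : ℝ) :
    (fun h : ℝ => if h ≤ c then (1 : ℝ) else 0) = (Set.Iic c).indicator 1 := by
  ext h
  simp [Set.indicator]

lemma integrableOn_ite_le (c : ℝ) {s : Set ℝ} (hs : volume s ≠ ⊤) :
    IntegrableOn (fun h : ℝ => if h ≤ c then (1 : ℝ) else 0) s := by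
  rw [ite_le_eq_indicator_Iic]
  exact (integrableOn_const hs).indicator measurableSet_Iic

lemma setIntegral_Ioc_ite_le {c M : ℝ} (hc : c ∈ Set.Icc 0 M) :
    ∫ h in Set.Ioc 0 M, (if h ≤ c then (1 : ℝ) else 0) = c := by
  rw [ite_le_eq_indicator_Iic, integral_indicator measurableSet_Iic,
    Measure.restrict_restrict measurableSet_Iic, Set.Iic_inter_Ioc_of_le hc.2]
  simp [hc.1]

variable {ι : Type*} (s : Finset ι) (w c : ι → ℝ)

lemma integrableOn_sum_mul_ite_le {t : Set ℝ} (ht : volume t ≠ ⊤) :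
    IntegrableOn (fun h => ∑ i ∈ s, w i * if h ≤ c i then (1 : ℝ) else 0) t :=
  integrable_finsetSum _ fun i _ => (integrableOn_ite_le (c i) ht).const_mul (w i)

lemma setIntegral_Ioc_sum_mul_ite_le {M : ℝ} (hc : ∀ i ∈ s, c i ∈ Set.Icc 0 M) :
    ∫ h in Set.Ioc 0 M, (∑ i ∈ s, w i * if h ≤ c i then (1 : ℝ) else 0) =
      ∑ i ∈ s, w i * c i := by
  rw [integral_finsetSum _ fun i _ =>
    (integrableOn_ite_le (c i) measure_Ioc_lt_top.ne).const_mul (w i)]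
  exact sum_congr rfl fun i hi => by rw [integral_const_mul, setIntegral_Ioc_ite_le (hc i hi)]

end Coarea

noncomputable def superlevelIndicator (g : V → ℝ) (h : ℝ) (x : V) : ℝ := if h ≤ g x then 1 else 0

lemma dirichletForm_superlevelIndicator (g : V → ℝ) (h : ℝ) :
    dirichletForm π Q (superlevelIndicator g h) =
      (∑ x, π x * if h ≤ g x then (1 : ℝ) else 0) -
        ∑ e, edgeMeasure π Q e * if h ≤ min (g e.1) (g e.2) then (1 : ℝ) else 0 := by
  simp only [dirichletForm_eq_sub_sum_edgeMeasure, superlevelIndicator, sq, ite_zero_mul_ite_zero,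
    and_self, mul_one, le_min_iff]

lemma setIntegral_Ioc_dirichletForm_superlevelIndicator (hQrow : ∀ x, ∑ y, Q x y = 1)
    (hrev : ∀ x y, π x * Q x y = π y * Q y x) {g : V → ℝ} {M : ℝ}
    (hg : ∀ x, g x ∈ Set.Icc 0 M) :
    ∫ h in Set.Ioc 0 M, dirichletForm π Q (superlevelIndicator g h) =
      (∑ e, edgeMeasure π Q e * |g e.1 - g e.2|) / 2 := by
  have hmin : ∀ e : V × V, min (g e.1) (g e.2) ∈ Set.Icc 0 M := fun e =>
    ⟨le_min (hg _).1 (hg _).1, min_le_of_left_le (hg _).2⟩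
  simp_rw [dirichletForm_superlevelIndicator]
  rw [integral_sub (integrableOn_sum_mul_ite_le _ _ _ measure_Ioc_lt_top.ne)
      (integrableOn_sum_mul_ite_le _ _ _ measure_Ioc_lt_top.ne),
    setIntegral_Ioc_sum_mul_ite_le _ _ _ fun x _ => hg x,
    setIntegral_Ioc_sum_mul_ite_le _ _ _ fun e _ => hmin e]
  have two_min : ∀ e : V × V, edgeMeasure π Q e * min (g e.1) (g e.2) =
      (edgeMeasure π Q e * g e.1 + edgeMeasure π Q e * g e.2
        - edgeMeasure π Q e * |g e.1 - g e.2|) / 2 := fun e => by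
    rcases le_total (g e.1) (g e.2) with hle | hle
    · rw [min_eq_left hle, abs_of_nonpos (sub_nonpos.2 hle)]; ring
    · rw [min_eq_right hle, abs_of_nonneg (sub_nonneg.2 hle)]; ring
  simp only [two_min, ← sum_div, sum_sub_distrib, sum_add_distrib,
    sum_edgeMeasure_mul_fst hQrow, sum_edgeMeasure_mul_snd hQrow hrev]
  ring

lemma exists_mem_Ioo_nonpos_of_setIntegral_Ioc_nonpos {f : ℝ → ℝ} {a b : ℝ} (hab : a < b)
    (hf : IntegrableOn f (Set.Ioc a b)) (h : ∫ x in Set.Ioc a b, f x ≤ 0) :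
    ∃ x ∈ Set.Ioo a b, f x ≤ 0 := by
  rw [integral_Ioc_eq_integral_Ioo] at h
  obtain ⟨x, hx, hfx⟩ := exists_le_setAverage (by simp [hab]) (by simp)
    (hf.mono_set Set.Ioo_subset_Ioc_self)
  refine ⟨x, hx, hfx.trans ?_⟩
  rw [setAverage_eq, smul_eq_mul]
  exact mul_nonpos_of_nonneg_of_nonpos (by positivity) h

theorem exists_superlevel_dirichletForm_le (hQrow : ∀ x, ∑ y, Q x y = 1)
    (hrev : ∀ x y, π x * Q x y = π y * Q y x) {g : V → ℝ} {M C : ℝ} (hM : 0 < M)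
    (hg : ∀ x, g x ∈ Set.Icc 0 M)
    (hC : (∑ e, edgeMeasure π Q e * |g e.1 - g e.2|) / 2 ≤ C * ∑ x, π x * g x) :
    ∃ h ∈ Set.Ioo 0 M, dirichletForm π Q (superlevelIndicator g h) ≤
      C * ∑ x, π x * superlevelIndicator g h x := by
  have hfin : volume (Set.Ioc (0 : ℝ) M) ≠ ⊤ := measure_Ioc_lt_top.ne
  have hmass : IntegrableOn (fun h => ∑ x, π x * superlevelIndicator g h x) (Set.Ioc 0 M) :=
    integrableOn_sum_mul_ite_le univ π g hfin
  have henergy : IntegrableOn (fun h => dirichletForm π Q (superlevelIndicator g h))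
      (Set.Ioc 0 M) := by
    simp_rw [dirichletForm_superlevelIndicator]
    exact (integrableOn_sum_mul_ite_le _ _ _ hfin).sub (integrableOn_sum_mul_ite_le _ _ _ hfin)
  obtain ⟨h, hh, hle⟩ := exists_mem_Ioo_nonpos_of_setIntegral_Ioc_nonpos hM
    (henergy.sub (hmass.const_mul C)) <| by
      rw [Pi.sub_def, integral_sub henergy (hmass.const_mul C), integral_const_mul,
        setIntegral_Ioc_dirichletForm_superlevelIndicator hQrow hrev hg]
      simp only [superlevelIndicator]
      rw [setIntegral_Ioc_sum_mul_ite_le _ _ _ fun x _ => hg x]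
      linarith
  exact ⟨h, hh, sub_nonpos.1 hle⟩

end

theorem discrete_cheeger_general {V : Type*} [Fintype V]
    (Q : Matrix V V ℝ) (π : V → ℝ)
    (hπpos : ∀ x, 0 < π x)
    (hQ0 : ∀ x y, 0 ≤ Q x y) (hQrow : ∀ x, ∑ y, Q x y = 1)
    (hrev : ∀ x y, π x * Q x y = π y * Q y x)
    (ψ : V → ℝ) (hψ : ∀ x, ψ x ∈ Set.Icc (0 : ℝ) 1)
    (hψpos : 0 < ∑ x, π x * ψ x ^ 2) :
    ∃ h : ℝ, 0 < h ∧ h < 1 ∧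
      (0 < ∑ x, π x * (if h ≤ ψ x ^ 2 then (1 : ℝ) else 0)) ∧
      (∑ x, π x * (if h ≤ ψ x ^ 2 then (1 : ℝ) else 0) *
          ((if h ≤ ψ x ^ 2 then (1 : ℝ) else 0) -
            ∑ y, Q x y * (if h ≤ ψ y ^ 2 then (1 : ℝ) else 0))) /
        (∑ x, π x * (if h ≤ ψ x ^ 2 then (1 : ℝ) else 0))
      ≤ Real.sqrt (2 * (∑ x, π x * ψ x * (ψ x - ∑ y, Q x y * ψ y)) /
          (∑ x, π x * ψ x ^ 2)) := by
  have hπ : ∀ x, 0 ≤ π x := fun x => (hπpos x).le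
  obtain ⟨x₀, -, hx₀⟩ := exists_max_image univ (fun x => ψ x ^ 2)
    ((exists_ne_zero_of_sum_ne_zero hψpos.ne').imp fun x hx => hx.1)
  have hM : 0 < ψ x₀ ^ 2 := lt_of_not_ge fun h => hψpos.not_ge <| sum_nonpos fun x _ =>
    mul_nonpos_of_nonneg_of_nonpos (hπ x) ((hx₀ x (mem_univ x)).trans h)
  obtain ⟨h, ⟨h0, hlt⟩, hle⟩ := exists_superlevel_dirichletForm_le hQrow hrev hM
    (fun x => ⟨sq_nonneg _, hx₀ x (mem_univ x)⟩)
    (sum_edgeMeasure_mul_abs_sq_sub_sq_div_two_le hπ hQ0 hQrow hrev ψ hψpos)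
  have hmass : 0 < ∑ x, π x * superlevelIndicator (ψ · ^ 2) h x :=
    calc 0 < π x₀ * superlevelIndicator (ψ · ^ 2) h x₀ := by
          simpa [superlevelIndicator, hlt.le] using hπpos x₀
      _ ≤ _ := single_le_sum (fun x _ => mul_nonneg (hπ x) (by
          unfold superlevelIndicator; split_ifs <;> norm_num)) (mem_univ x₀)
  exact ⟨h, h0, hlt.trans_le (pow_le_one₀ (hψ x₀).1 (hψ x₀).2), hmass,
    (div_le_iff₀ hmass).2 hle⟩

/-- Discrete Cheeger inequality. For a reversible Markov operator `Q`
on a finite state space with stationary measure `π`, and any `ψ : V → [0,1]` with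
`‖ψ‖_π > 0`, there is a threshold `h ∈ (0,1)` such that the level set
`S_h = {x : ψ(x)² ≥ h}` has `⟪1_S, (I-Q)1_S⟫_π / π(S_h) ≤ √(2 ⟪ψ,(I-Q)ψ⟫_π / ‖ψ‖_π²)`. -/
theorem discrete_cheeger {V : Type*} [Fintype V] [Nonempty V]
    (Q : Matrix V V ℝ) (π : V → ℝ)
    (hπpos : ∀ x, 0 < π x) (hπ1 : ∑ x, π x = 1)
    (hQ0 : ∀ x y, 0 ≤ Q x y) (hQrow : ∀ x, ∑ y, Q x y = 1)
    (hrev : ∀ x y, π x * Q x y = π y * Q y x)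
    (ψ : V → ℝ) (hψ : ∀ x, ψ x ∈ Set.Icc (0 : ℝ) 1)
    (hψpos : 0 < ∑ x, π x * ψ x ^ 2) :
    ∃ h : ℝ, 0 < h ∧ h < 1 ∧
      (0 < ∑ x, π x * (if h ≤ ψ x ^ 2 then (1 : ℝ) else 0)) ∧
      (∑ x, π x * (if h ≤ ψ x ^ 2 then (1 : ℝ) else 0) *
          ((if h ≤ ψ x ^ 2 then (1 : ℝ) else 0) -
            ∑ y, Q x y * (if h ≤ ψ y ^ 2 then (1 : ℝ) else 0))) /
        (∑ x, π x * (if h ≤ ψ x ^ 2 then (1 : ℝ) else 0))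
      ≤ Real.sqrt (2 * (∑ x, π x * ψ x * (ψ x - ∑ y, Q x y * ψ y)) /
          (∑ x, π x * ψ x ^ 2)) :=
  discrete_cheeger_general Q π hπpos hQ0 hQrow hrev ψ hψ hψpos
end

section
/- Let $G$ be a finite connected graph with random walk transition probabilities $p(x,y) = \mathbf{1}_{\{x,y\} \in E}/\deg(x)$ and stationary measure $\pi(x) = \deg(x)/(2|E|)$. Suppose $S \subseteq V$ satisfies $\langle \mathbf{1}_S, P^T \mathbf{1}_S\rangle_\pi \geq (1-\delta)\pi(S)$ for some $\delta \geq 0$ and integer $T \geq 1$. Then for any $\gamma > 0$, $\pi(\{x \in S : p_{2T}(x,x) \geq \frac{\pi(x)}{4\gamma|S|}\}) \geq (1-2\delta)\pi(S) - 2\pi(\{x \in S : \pi(x) > \gamma\})$. -/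
open Finset Classical

noncomputable section

/-- The random walk transition matrix `P(x,y) = 1_{x~y}/deg(x)` of a graph. -/
def walkMatrix {V : Type*} [Fintype V] [DecidableEq V] (G : SimpleGraph V)
    [DecidableRel G.Adj] : Matrix V V ℝ :=
  Matrix.diagonal (fun x => ((G.degree x : ℝ))⁻¹) * G.adjMatrix ℝ

/-- The stationary measure `π(x) = deg(x)/(2|E|)`. -/
def statMeasure {V : Type*} [Fintype V] [DecidableEq V] (G : SimpleGraph V)
    [DecidableRel G.Adj] (x : V) : ℝ :=
  (G.degree x : ℝ) / (2 * G.edgeFinset.card)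

set_option linter.unusedSectionVars false
set_option linter.unusedVariables false
set_option maxHeartbeats 1000000

section Helpers

variable {V : Type*} [Fintype V] [DecidableEq V] (G : SimpleGraph V) [DecidableRel G.Adj]

lemma walk_apply (x y : V) :
    walkMatrix G x y = ((G.degree x : ℝ))⁻¹ * G.adjMatrix ℝ x y := by
  simp only [walkMatrix]
  rw [Matrix.diagonal_mul]

lemma walk_nonneg (n : ℕ) (x y : V) : 0 ≤ (walkMatrix G ^ n) x y := by
  induction n generalizing x y with
  | zero => simp [Matrix.one_apply]; positivity
  | succ n ih =>
    rw [pow_succ, Matrix.mul_apply]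
    refine Finset.sum_nonneg fun z _ => mul_nonneg (ih x z) ?_
    rw [walk_apply]
    refine mul_nonneg (by positivity) ?_
    rw [SimpleGraph.adjMatrix_apply]
    split <;> norm_num

lemma adj_row_sum (x : V) : ∑ y, G.adjMatrix ℝ x y = G.degree x := by
  simp [SimpleGraph.adjMatrix_apply, SimpleGraph.degree, SimpleGraph.neighborFinset_eq_filter,
    Finset.sum_boole]

lemma adj_symm_entry (x y : V) : G.adjMatrix ℝ x y = G.adjMatrix ℝ y x := by
  simp [SimpleGraph.adjMatrix_apply, SimpleGraph.adj_comm]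

lemma walk_row_sum (hd : ∀ v, 0 < G.degree v) (x : V) : ∑ y, walkMatrix G x y = 1 := by
  simp_rw [walk_apply, ← Finset.mul_sum, adj_row_sum]
  exact inv_mul_cancel₀ (by exact_mod_cast (hd x).ne')

lemma walk_pow_row_sum (hd : ∀ v, 0 < G.degree v) (n : ℕ) (x : V) :
    ∑ y, (walkMatrix G ^ n) x y = 1 := by
  induction n generalizing x with
  | zero => simp [Matrix.one_apply]
  | succ n ih =>
    simp_rw [pow_succ, Matrix.mul_apply]
    rw [Finset.sum_comm]
    have h : ∀ z, ∑ y, (walkMatrix G ^ n) x z * walkMatrix G z y = (walkMatrix G ^ n) x z := by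
      intro z; rw [← Finset.mul_sum, walk_row_sum G hd, mul_one]
    rw [Finset.sum_congr rfl fun z _ => h z]
    exact ih x

lemma deg_mul_walk (hd : ∀ v, 0 < G.degree v) (x y : V) :
    (G.degree x : ℝ) * walkMatrix G x y = G.adjMatrix ℝ x y := by
  rw [walk_apply, ← mul_assoc, mul_inv_cancel₀ (by exact_mod_cast (hd x).ne'), one_mul]

lemma walk_rev (hd : ∀ v, 0 < G.degree v) (n : ℕ) (x y : V) :
    (G.degree x : ℝ) * (walkMatrix G ^ n) x y = (G.degree y : ℝ) * (walkMatrix G ^ n) y x := by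
  induction n generalizing x y with
  | zero =>
    simp only [pow_zero, Matrix.one_apply]
    by_cases h : x = y
    · subst h; rfl
    · simp [h, Ne.symm h]
  | succ n ih =>
    have step : ∀ z, (G.degree x : ℝ) * (walkMatrix G x z * (walkMatrix G ^ n) z y)
        = (G.degree y : ℝ) * ((walkMatrix G ^ n) y z * walkMatrix G z x) := by
      intro z
      rw [← mul_assoc, deg_mul_walk G hd, adj_symm_entry, ← deg_mul_walk G hd,
        mul_right_comm, ih z y, mul_assoc]
    calc (G.degree x : ℝ) * (walkMatrix G ^ (n+1)) x y
        = ∑ z, (G.degree x : ℝ) * (walkMatrix G x z * (walkMatrix G ^ n) z y) := by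
          rw [pow_succ', Matrix.mul_apply, Finset.mul_sum]
      _ = ∑ z, (G.degree y : ℝ) * ((walkMatrix G ^ n) y z * walkMatrix G z x) :=
          Finset.sum_congr rfl fun z _ => step z
      _ = (G.degree y : ℝ) * (walkMatrix G ^ (n+1)) y x := by
          rw [← Finset.mul_sum, pow_succ, Matrix.mul_apply]

lemma rev_pi (hd : ∀ v, 0 < G.degree v) (n : ℕ) (x y : V) :
    statMeasure G x * (walkMatrix G ^ n) x y = statMeasure G y * (walkMatrix G ^ n) y x := by
  unfold statMeasure
  rw [div_mul_eq_mul_div, div_mul_eq_mul_div, walk_rev G hd]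

lemma walk_stat (hd : ∀ v, 0 < G.degree v) (n : ℕ) (y : V) :
    ∑ x, statMeasure G x * (walkMatrix G ^ n) x y = statMeasure G y := by
  rw [Finset.sum_congr rfl fun x _ => rev_pi G hd n x y, ← Finset.mul_sum,
    walk_pow_row_sum G hd, mul_one]

end Helpers

/-- If `⟪1_S, P^T 1_S⟫_π ≥ (1-δ)π(S)`, then for any `γ > 0`,
`π({x ∈ S : p_{2T}(x,x) ≥ π(x)/(4γ|S|)}) ≥ (1-2δ)π(S) - 2π({x ∈ S : π(x) > γ})`. -/
theorem return_prob_lower_bound {V : Type*} [Fintype V] [DecidableEq V]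
    (G : SimpleGraph V) [DecidableRel G.Adj] (hconn : G.Connected)
    (S : Finset V) (δ : ℝ) (hδ : 0 ≤ δ) (T : ℕ) (hT : 1 ≤ T)
    (hS : (1 - δ) * ∑ x ∈ S, statMeasure G x ≤
      ∑ x, statMeasure G x * (if x ∈ S then (1 : ℝ) else 0) *
        ((walkMatrix G ^ T).mulVec (fun y => if y ∈ S then (1 : ℝ) else 0) x))
    (γ : ℝ) (hγ : 0 < γ) :
    (1 - 2 * δ) * (∑ x ∈ S, statMeasure G x) -
        2 * ∑ x ∈ S.filter (fun x => γ < statMeasure G x), statMeasure G x ≤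
      ∑ x ∈ S.filter (fun x =>
          statMeasure G x / (4 * γ * S.card) ≤ (walkMatrix G ^ (2 * T)) x x),
        statMeasure G x := by

  classical
  by_cases hE : G.edgeFinset.card = 0
  · have hπ0 : ∀ x : V, statMeasure G x = 0 := by
      intro x; simp [statMeasure, hE]
    simp [hπ0]
  · have hEpos : 0 < G.edgeFinset.card := Nat.pos_of_ne_zero hE
    have hd : ∀ v, 0 < G.degree v := by
      intro v
      rw [SimpleGraph.degree_pos_iff_exists_adj]
      obtain ⟨e, he⟩ := Finset.card_pos.mp hEpos
      rw [SimpleGraph.mem_edgeFinset] at he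
      induction e using Sym2.ind with
      | _ a b =>
        have hab : G.Adj a b := he
        obtain ⟨w⟩ := hconn.preconnected v a
        cases w with
        | nil => exact ⟨b, hab⟩
        | cons h _ => exact ⟨_, h⟩
    have h2E : (0 : ℝ) < 2 * G.edgeFinset.card :=
      mul_pos two_pos (by exact_mod_cast hEpos)
    have hπpos : ∀ x, 0 < statMeasure G x := fun x =>
      div_pos (by exact_mod_cast hd x) h2E
    -- rewrite the hypothesis
    have hmv : ∀ x : V, statMeasure G x * (if x ∈ S then (1 : ℝ) else 0) *
        ((walkMatrix G ^ T).mulVec (fun y => if y ∈ S then (1 : ℝ) else 0) x)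
        = if x ∈ S then statMeasure G x * ∑ y ∈ S, (walkMatrix G ^ T) x y else 0 := by
      intro x
      by_cases hx : x ∈ S
      · simp only [hx, if_true, mul_one]
        congr 1
        simp only [Matrix.mulVec, dotProduct]
        simp_rw [mul_ite, mul_one, mul_zero]
        rw [Finset.sum_ite_mem, Finset.univ_inter]
      · simp [hx]
    rw [Finset.sum_congr rfl fun x _ => hmv x, Finset.sum_ite_mem, Finset.univ_inter] at hS
    -- notation
    set S' : Finset V := S.filter (fun y => ¬ γ < statMeasure G y) with hS'def
    set f : V → ℝ := fun x => ∑ y ∈ S', (walkMatrix G ^ T) x y with hfdef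
    -- split sums over S into B and S' parts
    have hsplit : ∀ x : V, ∑ y ∈ S, (walkMatrix G ^ T) x y
        = (∑ y ∈ S.filter (fun y => γ < statMeasure G y), (walkMatrix G ^ T) x y) + f x :=
      fun x => (Finset.sum_filter_add_sum_filter_not S _ _).symm
    -- stationarity bound
    have hstatB : ∑ x ∈ S, statMeasure G x *
          ∑ y ∈ S.filter (fun y => γ < statMeasure G y), (walkMatrix G ^ T) x y
        ≤ ∑ y ∈ S.filter (fun y => γ < statMeasure G y), statMeasure G y := by
      have h1 : ∑ x ∈ S, statMeasure G x *
            ∑ y ∈ S.filter (fun y => γ < statMeasure G y), (walkMatrix G ^ T) x y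
          ≤ ∑ x : V, statMeasure G x *
            ∑ y ∈ S.filter (fun y => γ < statMeasure G y), (walkMatrix G ^ T) x y := by
        refine Finset.sum_le_sum_of_subset_of_nonneg (Finset.subset_univ S) fun x _ _ => ?_
        exact mul_nonneg (hπpos x).le (Finset.sum_nonneg fun y _ => walk_nonneg G T x y)
      refine h1.trans (le_of_eq ?_)
      have hswap : ∑ x : V, statMeasure G x *
            ∑ y ∈ S.filter (fun y => γ < statMeasure G y), (walkMatrix G ^ T) x y
          = ∑ y ∈ S.filter (fun y => γ < statMeasure G y), ∑ x : V,
              statMeasure G x * (walkMatrix G ^ T) x y := by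
        simp_rw [Finset.mul_sum]; exact Finset.sum_comm
      rw [hswap]
      exact Finset.sum_congr rfl fun y _ => walk_stat G hd T y
    -- lower bound on ∑ π f
    have hC1 : (1 - δ) * (∑ x ∈ S, statMeasure G x)
        - ∑ y ∈ S.filter (fun y => γ < statMeasure G y), statMeasure G y
        ≤ ∑ x ∈ S, statMeasure G x * f x := by
      have hdec : ∑ x ∈ S, statMeasure G x * ∑ y ∈ S, (walkMatrix G ^ T) x y
          = (∑ x ∈ S, statMeasure G x *
              ∑ y ∈ S.filter (fun y => γ < statMeasure G y), (walkMatrix G ^ T) x y)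
            + ∑ x ∈ S, statMeasure G x * f x := by
        rw [← Finset.sum_add_distrib]
        exact Finset.sum_congr rfl fun x _ => by rw [← mul_add, ← hsplit x]
      linarith
    have hf_nonneg : ∀ x, 0 ≤ f x := fun x =>
      Finset.sum_nonneg fun y _ => walk_nonneg G T x y
    have hf_le_one : ∀ x, f x ≤ 1 := by
      intro x
      calc f x ≤ ∑ y, (walkMatrix G ^ T) x y :=
            Finset.sum_le_sum_of_subset_of_nonneg (Finset.subset_univ S')
              (fun y _ _ => walk_nonneg G T x y)
        _ = 1 := walk_pow_row_sum G hd T x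
    -- Markov step
    have hCsplit : (∑ x ∈ S.filter (fun x => (1:ℝ)/2 ≤ f x), statMeasure G x)
        + ∑ x ∈ S.filter (fun x => ¬ (1:ℝ)/2 ≤ f x), statMeasure G x
        = ∑ x ∈ S, statMeasure G x :=
      Finset.sum_filter_add_sum_filter_not S _ _
    have hD : ∑ x ∈ S, statMeasure G x * f x ≤
        (∑ x ∈ S.filter (fun x => (1:ℝ)/2 ≤ f x), statMeasure G x)
        + (1/2) * ∑ x ∈ S.filter (fun x => ¬ (1:ℝ)/2 ≤ f x), statMeasure G x := by
      rw [← Finset.sum_filter_add_sum_filter_not S (fun x => (1:ℝ)/2 ≤ f x)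
        (fun x => statMeasure G x * f x), Finset.mul_sum]
      refine add_le_add (Finset.sum_le_sum fun x hx => ?_) (Finset.sum_le_sum fun x hx => ?_)
      · have h2 := (Finset.mem_filter.mp hx).2
        nlinarith [hπpos x, hf_le_one x]
      · have h2 := (Finset.mem_filter.mp hx).2
        push_neg at h2
        nlinarith [hπpos x, hf_nonneg x]
    -- the good set contains the Markov set
    have hCA : S.filter (fun x => (1:ℝ)/2 ≤ f x) ⊆ S.filter (fun x =>
        statMeasure G x / (4 * γ * S.card) ≤ (walkMatrix G ^ (2 * T)) x x) := by
      intro x hx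
      obtain ⟨hxS, hfx⟩ := Finset.mem_filter.mp hx
      rw [Finset.mem_filter]
      refine ⟨hxS, ?_⟩
      have hScard : 0 < (S.card : ℝ) := by
        exact_mod_cast Finset.card_pos.mpr ⟨x, hxS⟩
      have hS'card : (S'.card : ℝ) ≤ S.card := by
        exact_mod_cast Finset.card_le_card (Finset.filter_subset _ S)
      -- Cauchy–Schwarz
      have hcs : (f x) ^ 2 ≤ S'.card * ∑ y ∈ S', ((walkMatrix G ^ T) x y) ^ 2 :=
        sq_sum_le_card_mul_sum_sq
      have hsqnn : (0:ℝ) ≤ ∑ y ∈ S', ((walkMatrix G ^ T) x y) ^ 2 :=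
        Finset.sum_nonneg fun y _ => sq_nonneg _
      have hq : (1:ℝ)/4 ≤ S.card * ∑ y ∈ S', ((walkMatrix G ^ T) x y) ^ 2 := by
        have h14 : (1:ℝ)/4 ≤ (f x) ^ 2 := by nlinarith
        nlinarith
      -- pointwise bound
      have hpt : ∀ y ∈ S', (statMeasure G x / γ) * ((walkMatrix G ^ T) x y) ^ 2
          ≤ (walkMatrix G ^ T) x y * (walkMatrix G ^ T) y x := by
        intro y hy
        have hyγ : statMeasure G y ≤ γ := not_lt.mp (Finset.mem_filter.mp hy).2
        have hπy := hπpos y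
        have hpyx : (walkMatrix G ^ T) y x
            = statMeasure G x * (walkMatrix G ^ T) x y / statMeasure G y := by
          rw [eq_div_iff hπy.ne']
          linear_combination rev_pi G hd T y x
        rw [hpyx]
        have hmono : statMeasure G x / γ ≤ statMeasure G x / statMeasure G y :=
          div_le_div_of_nonneg_left (hπpos x).le hπy hyγ
        calc (statMeasure G x / γ) * ((walkMatrix G ^ T) x y) ^ 2
            ≤ (statMeasure G x / statMeasure G y) * ((walkMatrix G ^ T) x y) ^ 2 :=
              mul_le_mul_of_nonneg_right hmono (sq_nonneg _)
          _ = (walkMatrix G ^ T) x y * (statMeasure G x * (walkMatrix G ^ T) x y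
                / statMeasure G y) := by ring
      have hsum : (statMeasure G x / γ) * ∑ y ∈ S', ((walkMatrix G ^ T) x y) ^ 2
          ≤ ∑ y ∈ S', (walkMatrix G ^ T) x y * (walkMatrix G ^ T) y x := by
        rw [Finset.mul_sum]; exact Finset.sum_le_sum hpt
      have hupper : ∑ y ∈ S', (walkMatrix G ^ T) x y * (walkMatrix G ^ T) y x
          ≤ (walkMatrix G ^ (2 * T)) x x := by
        rw [two_mul, pow_add, Matrix.mul_apply]
        refine Finset.sum_le_sum_of_subset_of_nonneg (Finset.subset_univ S') fun y _ _ =>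
          mul_nonneg (walk_nonneg G T x y) (walk_nonneg G T y x)
      have hfinal : statMeasure G x / (4 * γ * S.card)
          ≤ (statMeasure G x / γ) * ∑ y ∈ S', ((walkMatrix G ^ T) x y) ^ 2 := by
        have heq : statMeasure G x / (4 * γ * S.card)
            = (statMeasure G x / γ) * (1 / (4 * S.card)) := by
          rw [div_mul_div_comm, mul_one]
          congr 1
          ring
        rw [heq]
        refine mul_le_mul_of_nonneg_left ?_ (div_nonneg (hπpos x).le hγ.le)
        rw [div_le_iff₀ (by positivity)]
        nlinarith
      linarith
    have hCA_sum : ∑ x ∈ S.filter (fun x => (1:ℝ)/2 ≤ f x), statMeasure G x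
        ≤ ∑ x ∈ S.filter (fun x =>
            statMeasure G x / (4 * γ * S.card) ≤ (walkMatrix G ^ (2 * T)) x x),
          statMeasure G x :=
      Finset.sum_le_sum_of_subset_of_nonneg hCA fun x _ _ => (hπpos x).le
    linarith


end
end

section
/- Let $G$ be a connected locally finite graph, $T \geq 1$ an integer, and define $\Phi_T(x) = P^T\mathbf{1}_x/\sqrt{\deg(x)} \in \ell^2(G)$ and $\mathcal{C}_T(x) = \{y \in V(G) : \|\Phi_T(x) - \Phi_T(y)\| \leq \|\Phi_T(y)\|\}$ (distances in $\ell^2(G)$). Then for every $x \in V(G)$ with $p_{2T}(x,x) > 0$, $|\mathcal{C}_T(x)| \leq \frac{4}{p_{2T}(x,x)}$. -/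
/-!
For the degree-weighted inner product `⟨·,·⟩`, `P` is a self-adjoint contraction and the vectors
`1_y / √(deg y)` form an orthonormal basis. If `y ∈ 𝒞_T(x)`, expanding
`‖Φ_T(x) - Φ_T(y)‖² ≤ ‖Φ_T(y)‖²` gives `⟨Φ_T(x), Φ_T(y)⟩ ≥ ‖Φ_T(x)‖² / 2 = p / 2` with
`p = p_{2T}(x,x)`. Since `⟨Φ_T(x), Φ_T(y)⟩ = ⟨P^T Φ_T(x), 1_y / √(deg y)⟩`, Parseval shows that the
squares of these numbers sum to `‖P^T Φ_T(x)‖² ≤ ‖Φ_T(x)‖² = p`, so `|𝒞_T(x)| p² / 4 ≤ p`.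
-/

open Finset

noncomputable section

/-- The heat kernel embedding `Φ_T(x) = P^T 1_x / √(deg x)`. -/
def heatEmbed {V : Type*} [Fintype V] [DecidableEq V] (G : SimpleGraph V)
    [DecidableRel G.Adj] (T : ℕ) (x : V) : V → ℝ :=
  fun v => (walkMatrix G ^ T).mulVec (fun u => if u = x then (1 : ℝ) else 0) v /
    Real.sqrt (G.degree x)

/-- The norm of `ℓ²(G)`, the degree-weighted `ℓ²` space. -/
def l2norm {V : Type*} [Fintype V] [DecidableEq V] (G : SimpleGraph V)
    [DecidableRel G.Adj] (f : V → ℝ) : ℝ :=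
  Real.sqrt (∑ v, (G.degree v : ℝ) * f v ^ 2)

lemma ncard_mul_sq_le_sum_sq {ι : Type*} [Fintype ι] (S : Set ι) (a : ι → ℝ) {c : ℝ}
    (hc : 0 ≤ c) (h : ∀ i ∈ S, c ≤ a i) : S.ncard * c ^ 2 ≤ ∑ i, a i ^ 2 := by
  classical
  calc (S.ncard : ℝ) * c ^ 2 = ∑ i ∈ S.toFinset, c ^ 2 := by
        rw [Set.ncard_eq_toFinset_card', Finset.sum_const, nsmul_eq_mul]
    _ ≤ ∑ i ∈ S.toFinset, a i ^ 2 := Finset.sum_le_sum fun i hi =>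
        pow_le_pow_left₀ hc (h i (Set.mem_toFinset.mp hi)) 2
    _ ≤ ∑ i, a i ^ 2 := Finset.sum_le_sum_of_subset_of_nonneg (Finset.subset_univ _)
        fun i _ _ => sq_nonneg _

namespace SimpleGraph

open Matrix

variable {V : Type*} [Fintype V] (G : SimpleGraph V) [DecidableRel G.Adj]

def degInner (f g : V → ℝ) : ℝ := ∑ v, (G.degree v : ℝ) * f v * g v

lemma degInner_self_nonneg (f : V → ℝ) : 0 ≤ G.degInner f f :=
  Finset.sum_nonneg fun v _ => by
    rw [mul_assoc]; exact mul_nonneg (Nat.cast_nonneg _) (mul_self_nonneg _)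

lemma degInner_sub_self (f g : V → ℝ) :
    G.degInner (f - g) (f - g) = G.degInner f f - 2 * G.degInner f g + G.degInner g g := by
  unfold degInner
  rw [Finset.mul_sum, ← Finset.sum_sub_distrib, ← Finset.sum_add_distrib]
  exact Finset.sum_congr rfl fun v _ => by simp only [Pi.sub_apply]; ring

lemma degInner_comm (f g : V → ℝ) : G.degInner f g = G.degInner g f :=
  Finset.sum_congr rfl fun v _ => by ring

lemma degInner_eq_dotProduct_adjMatrix_mulVec_one (f g : V → ℝ) :
    G.degInner f g = (f * g) ⬝ᵥ (G.adjMatrix ℝ *ᵥ 1) := by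
  refine Finset.sum_congr rfl fun v _ => ?_
  rw [Pi.mul_apply, show (1 : V → ℝ) = Function.const V 1 from rfl, adjMatrix_mulVec_const_apply]
  ring

variable [DecidableEq V]

def normalizedIndicator (y : V) : V → ℝ :=
  fun u => if u = y then (Real.sqrt (G.degree y))⁻¹ else 0

lemma l2norm_eq_sqrt_degInner (f : V → ℝ) : l2norm G f = Real.sqrt (G.degInner f f) := by
  unfold l2norm degInner
  congr 1
  exact Finset.sum_congr rfl fun v _ => by ring

lemma degInner_normalizedIndicator (f : V → ℝ) (y : V) :
    G.degInner f (G.normalizedIndicator y) = Real.sqrt (G.degree y) * f y := by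
  rw [degInner, Finset.sum_eq_single y (fun v _ hv => by simp [normalizedIndicator, hv])
    (by simp), normalizedIndicator, if_pos rfl, mul_right_comm, ← div_eq_mul_inv, Real.div_sqrt]

/-- Parseval's identity for the orthonormal basis `1_y / √(deg y)` of `ℓ²(G)`; at an isolated
`y` the vector is `0`, but `y` carries no weight. -/
lemma sum_degInner_normalizedIndicator_sq (f : V → ℝ) :
    ∑ y, G.degInner f (G.normalizedIndicator y) ^ 2 = G.degInner f f := by
  refine Finset.sum_congr rfl fun y _ => ?_
  rw [degInner_normalizedIndicator, mul_pow, Real.sq_sqrt (Nat.cast_nonneg _)]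
  ring

lemma degree_mul_walkMatrix_mulVec_apply (f : V → ℝ) (v : V) :
    (G.degree v : ℝ) * (walkMatrix G *ᵥ f) v = (G.adjMatrix ℝ *ᵥ f) v := by
  rw [walkMatrix, ← mulVec_mulVec, mulVec_diagonal, ← mul_assoc]
  rcases (G.degree v).eq_zero_or_pos with h | h
  · have : G.neighborFinset v = ∅ := by rw [← card_eq_zero, card_neighborFinset_eq_degree, h]
    simp [h, adjMatrix_mulVec_apply, this]
  · rw [mul_inv_cancel₀ (by positivity), one_mul]

lemma degInner_walkMatrix_mulVec_left (f g : V → ℝ) :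
    G.degInner (walkMatrix G *ᵥ f) g = (G.adjMatrix ℝ *ᵥ f) ⬝ᵥ g :=
  Finset.sum_congr rfl fun v _ => by rw [degree_mul_walkMatrix_mulVec_apply]

lemma degInner_walkMatrix_mulVec_comm (f g : V → ℝ) :
    G.degInner (walkMatrix G *ᵥ f) g = G.degInner f (walkMatrix G *ᵥ g) := by
  rw [degInner_comm G f, degInner_walkMatrix_mulVec_left, degInner_walkMatrix_mulVec_left,
    dotProduct_comm, dotProduct_mulVec, ← mulVec_transpose, transpose_adjMatrix]

lemma degInner_walkMatrix_pow_mulVec_comm (n : ℕ) (f g : V → ℝ) :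
    G.degInner (walkMatrix G ^ n *ᵥ f) g = G.degInner f (walkMatrix G ^ n *ᵥ g) := by
  induction n generalizing f with
  | zero => simp
  | succ n ih =>
    rw [pow_succ, ← mulVec_mulVec, ih, degInner_walkMatrix_mulVec_comm, mulVec_mulVec,
      ← pow_succ', pow_succ]

lemma sq_walkMatrix_mulVec_apply_le (f : V → ℝ) (v : V) :
    (walkMatrix G *ᵥ f) v ^ 2 ≤ (walkMatrix G *ᵥ (f ^ 2)) v := by
  simp only [walkMatrix, ← mulVec_mulVec, mulVec_diagonal, adjMatrix_mulVec_apply, Pi.pow_apply]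
  rcases (G.degree v).eq_zero_or_pos with h | h
  · simp [h]
  · have hd : (0 : ℝ) < G.degree v := by positivity
    have hcs := sq_sum_le_card_mul_sum_sq (s := G.neighborFinset v) (f := f)
    rw [card_neighborFinset_eq_degree] at hcs
    rw [mul_pow, inv_pow, ← div_eq_inv_mul, div_le_iff₀ (by positivity)]
    nlinarith [inv_mul_cancel₀ hd.ne']

lemma degInner_walkMatrix_mulVec_self_le (f : V → ℝ) :
    G.degInner (walkMatrix G *ᵥ f) (walkMatrix G *ᵥ f) ≤ G.degInner f f := calc
  G.degInner (walkMatrix G *ᵥ f) (walkMatrix G *ᵥ f)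
      ≤ G.degInner (walkMatrix G *ᵥ (f ^ 2)) 1 :=
    Finset.sum_le_sum fun v _ => by
      rw [mul_assoc, ← sq, Pi.one_apply, mul_one]
      exact mul_le_mul_of_nonneg_left (G.sq_walkMatrix_mulVec_apply_le f v) (Nat.cast_nonneg _)
  _ = G.degInner f f := by
    rw [degInner_walkMatrix_mulVec_left, dotProduct_comm, dotProduct_mulVec, ← mulVec_transpose,
      transpose_adjMatrix, dotProduct_comm, degInner_eq_dotProduct_adjMatrix_mulVec_one, sq]

lemma degInner_walkMatrix_pow_mulVec_self_le (n : ℕ) (f : V → ℝ) :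
    G.degInner (walkMatrix G ^ n *ᵥ f) (walkMatrix G ^ n *ᵥ f) ≤ G.degInner f f := by
  induction n generalizing f with
  | zero => simp
  | succ n ih =>
    rw [pow_succ, ← mulVec_mulVec]
    exact (ih _).trans (G.degInner_walkMatrix_mulVec_self_le f)

lemma mulVec_normalizedIndicator_apply (A : Matrix V V ℝ) (y v : V) :
    (A *ᵥ G.normalizedIndicator y) v = A v y / Real.sqrt (G.degree y) := by
  simp [normalizedIndicator, mulVec, dotProduct, div_eq_mul_inv]

lemma heatEmbed_eq_mulVec (T : ℕ) (y : V) :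
    heatEmbed G T y = (walkMatrix G ^ T) *ᵥ G.normalizedIndicator y := by
  ext v
  rw [mulVec_normalizedIndicator_apply]
  simp [heatEmbed, mulVec, dotProduct]

lemma degree_pos_of_walkMatrix_pow_apply_ne_zero {n : ℕ} (hn : 0 < n) {x z : V}
    (h : (walkMatrix G ^ n) x z ≠ 0) : 0 < G.degree x := by
  refine Nat.pos_of_ne_zero fun hx => h ?_
  obtain ⟨m, rfl⟩ := Nat.exists_eq_succ_of_ne_zero hn.ne'
  rw [pow_succ', mul_apply]
  refine Finset.sum_eq_zero fun u _ => ?_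
  rw [walkMatrix, diagonal_mul, hx, Nat.cast_zero, _root_.inv_zero, zero_mul, zero_mul]

lemma degInner_heatEmbed_self (T : ℕ) {x : V} (hx : 0 < G.degree x) :
    G.degInner (heatEmbed G T x) (heatEmbed G T x) = (walkMatrix G ^ (2 * T)) x x := by
  rw [heatEmbed_eq_mulVec, degInner_walkMatrix_pow_mulVec_comm, mulVec_mulVec, ← pow_add,
    degInner_comm, degInner_normalizedIndicator, mulVec_normalizedIndicator_apply, two_mul]
  field_simp

lemma sum_degInner_heatEmbed_sq_le (T : ℕ) (f : V → ℝ) :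
    ∑ y, G.degInner f (heatEmbed G T y) ^ 2 ≤ G.degInner f f :=
  calc ∑ y, G.degInner f (heatEmbed G T y) ^ 2
      = ∑ y, G.degInner (walkMatrix G ^ T *ᵥ f) (G.normalizedIndicator y) ^ 2 := by
        simp only [heatEmbed_eq_mulVec, degInner_walkMatrix_pow_mulVec_comm]
    _ = G.degInner (walkMatrix G ^ T *ᵥ f) (walkMatrix G ^ T *ᵥ f) :=
        G.sum_degInner_normalizedIndicator_sq _
    _ ≤ G.degInner f f := G.degInner_walkMatrix_pow_mulVec_self_le T f

lemma half_degInner_self_le_of_l2norm_sub_le {f g : V → ℝ}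
    (h : l2norm G (f - g) ≤ l2norm G g) :
    G.degInner f f / 2 ≤ G.degInner f g := by
  rw [l2norm_eq_sqrt_degInner, l2norm_eq_sqrt_degInner,
    Real.sqrt_le_sqrt_iff (G.degInner_self_nonneg g), degInner_sub_self] at h
  linarith

end SimpleGraph

theorem heat_cone_card_bound_general {V : Type*} [Fintype V] [DecidableEq V]
    (G : SimpleGraph V) [DecidableRel G.Adj]
    (T : ℕ) (hT : 1 ≤ T) (x : V)
    (hpos : 0 < (walkMatrix G ^ (2 * T)) x x) :
    (({y | l2norm G (heatEmbed G T x - heatEmbed G T y) ≤ l2norm G (heatEmbed G T y)}.ncard :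
        ℝ)) ≤ 4 / (walkMatrix G ^ (2 * T)) x x := by
  set C := {y | l2norm G (heatEmbed G T x - heatEmbed G T y) ≤ l2norm G (heatEmbed G T y)}
  have hx : 0 < G.degree x := G.degree_pos_of_walkMatrix_pow_apply_ne_zero (by omega) hpos.ne'
  have hself := G.degInner_heatEmbed_self T hx
  have hcard := ncard_mul_sq_le_sum_sq C (fun y => G.degInner (heatEmbed G T x) (heatEmbed G T y))
    (half_pos hpos).le fun y hy => hself ▸ G.half_degInner_self_le_of_l2norm_sub_le hy
  have hsum := G.sum_degInner_heatEmbed_sq_le T (heatEmbed G T x)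
  rw [le_div_iff₀ hpos]
  nlinarith

/-- The set `𝒞_T(x) = {y : ‖Φ_T(x) - Φ_T(y)‖ ≤ ‖Φ_T(y)‖}` satisfies
`|𝒞_T(x)| ≤ 4 / p_{2T}(x,x)` whenever `p_{2T}(x,x) > 0`. -/
theorem heat_cone_card_bound {V : Type*} [Fintype V] [DecidableEq V]
    (G : SimpleGraph V) [DecidableRel G.Adj] (hconn : G.Connected)
    (T : ℕ) (hT : 1 ≤ T) (x : V)
    (hpos : 0 < (walkMatrix G ^ (2 * T)) x x) :
    (({y | l2norm G (heatEmbed G T x - heatEmbed G T y) ≤ l2norm G (heatEmbed G T y)}.ncard :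
        ℝ)) ≤ 4 / (walkMatrix G ^ (2 * T)) x x :=
  heat_cone_card_bound_general G T hT x hpos

end
end

section
/- Let $G$ be a locally finite connected graph, and suppose that for every $x \in V(G)$ a set $U_x \subseteq B_G(x, r') \setminus B_G(x, r)$ is given such that removing $U_x$ separates $x$ from $V(G) \setminus B_G(x, r')$. Let $\{\beta_x\}_{x \in V(G)}$ be distinct real labels, define $\hat{U}_x = U_x \setminus \bigcup_{y : \beta_y < \beta_x} B_G(y, r)$ and $W = \bigcup_x \hat{U}_x$. Then every connected component of the induced subgraph $G[V(G) \setminus W]$ has diameter at most $2r'$ in $\mathrm{dist}_G$. -/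
/-!
Let `γ` be a walk in `G[V ∖ W]` between vertices `x, y` with `dist x y > 2r'`. Among the finitely
many vertices within distance `r` of `γ`, let `z` have the least label `β z`, and let `w ∈ γ` be
within distance `r` of `z`. One of `x, y` is farther than `r'` from `z`, so the part of `γ` from `w`
to it, preceded by a geodesic from `z` to `w`, must meet `U z`. The geodesic stays in the ball of
radius `r` around `z`, which `U z` avoids, so the meeting point `u` lies on `γ`. Every vertex
within distance `r` of `u` is within distance `r` of `γ` and so has label at least `β z`; hence
`u ∈ Û z ⊆ W`, a contradiction.
-/

namespace SimpleGraph

variable {V : Type*} {G : SimpleGraph V}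

theorem Connected.finite_setOf_dist_le (hconn : G.Connected)
    (hlf : ∀ v, (G.neighborSet v).Finite) (x : V) :
    ∀ n : ℕ, {z | G.dist x z ≤ n}.Finite
  | 0 => by simp [hconn.dist_eq_zero_iff]
  | n + 1 => by
    refine ((hconn.finite_setOf_dist_le hlf x n).biUnion fun w _ ↦ (hlf w).insert w).subset ?_
    intro z hz
    obtain ⟨p, hp⟩ := (hconn.preconnected z x).exists_walk_length_eq_dist
    cases p with
    | nil => exact Set.mem_biUnion (x := x) (by simp) (Set.mem_insert x _)
    | @cons _ w _ hadj q =>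
      have hq : G.dist x w ≤ n := by
        rw [dist_comm]
        have := dist_le q
        simp only [Set.mem_ofPred_eq, dist_comm (u := x), Walk.length_cons] at hz hp
        omega
      exact Set.mem_biUnion hq (Set.mem_insert_of_mem _ hadj.symm)

theorem Connected.finite_setOf_exists_dist_le (hconn : G.Connected)
    (hlf : ∀ v, (G.neighborSet v).Finite) {T : Set V} (hT : T.Finite) (r : ℕ) :
    {z | ∃ w ∈ T, G.dist z w ≤ r}.Finite := by
  refine (hT.biUnion fun w _ ↦ hconn.finite_setOf_dist_le hlf w r).subset ?_
  rintro z ⟨w, hw, hzw⟩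
  exact Set.mem_biUnion hw (by rwa [Set.mem_ofPred_eq, dist_comm])

theorem Walk.exists_mem_support_of_separates {U : Set V} {z w a : V} {r : ℕ}
    (hU : ∀ u ∈ U, r < G.dist z u) (hsep : ∀ p : G.Walk z a, ∃ u ∈ U, u ∈ p.support)
    (hzw : G.Reachable z w) (hdist : G.dist z w ≤ r) (p : G.Walk w a) :
    ∃ u ∈ U, u ∈ p.support := by
  classical
  obtain ⟨γ, hγ⟩ := hzw.exists_walk_length_eq_dist
  obtain ⟨u, huU, hu⟩ := hsep (γ.append p)
  refine ⟨u, huU, (Walk.mem_support_append_iff γ p).1 hu |>.resolve_left fun huγ ↦ ?_⟩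
  have : G.dist z u ≤ r :=
    calc G.dist z u ≤ (γ.takeUntil u huγ).length := dist_le _
      _ ≤ γ.length := γ.length_takeUntil_le_length huγ
      _ ≤ r := hγ ▸ hdist
  exact (hU u huU).not_ge this

end SimpleGraph

open SimpleGraph

theorem separator_shattering_general {V : Type*} (G : SimpleGraph V) (hconn : G.Connected)
    (hlf : ∀ v : V, (G.neighborSet v).Finite) (r r' : ℕ)
    (U : V → Set V)
    (hUsub : ∀ x, U x ⊆ {y | G.dist x y ≤ r'} \ {y | G.dist x y ≤ r})
    (hsep : ∀ x y : V, r' < G.dist x y → ∀ p : G.Walk x y, ∃ z ∈ U x, z ∈ p.support)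
    (β : V → ℝ)
    (W : Set V)
    (hW : W = ⋃ x : V, (U x \ {z | ∃ y, β y < β x ∧ G.dist y z ≤ r})) :
    ∀ x y : ↥(Wᶜ), (G.induce (Wᶜ : Set V)).Reachable x y →
      G.dist x.val y.val ≤ 2 * r' := by
  classical
  rintro ⟨x, _⟩ ⟨y, _⟩ ⟨p⟩
  by_contra! hfar
  dsimp only at hfar
  set γ : G.Walk x y := p.map (Embedding.induce (Wᶜ : Set V)).toHom
  have hγW : ∀ v ∈ γ.support, v ∉ W := by
    intro v hv
    obtain ⟨v', -, rfl⟩ := List.mem_map.1 (Walk.support_map _ p ▸ hv)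
    exact v'.2
  obtain ⟨z, ⟨w, hw, hzw⟩, hmin⟩ :=
    Set.exists_min_image {z | ∃ w ∈ γ.support, G.dist z w ≤ r} β
      (hconn.finite_setOf_exists_dist_le hlf (List.finite_toSet _) r)
      ⟨x, x, γ.start_mem_support, by simp⟩
  have hno_escape : ∀ a, r' < G.dist z a → ∀ q : G.Walk w a, q.support ⊆ γ.support → False := by
    intro a ha q hq
    obtain ⟨u, huU, hu⟩ := Walk.exists_mem_support_of_separates
      (fun u hu ↦ not_le.1 (hUsub z hu).2) (hsep z a ha) (hconn.preconnected z w) hzw q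
    refine hγW u (hq hu) (hW ▸ Set.mem_iUnion.2 ⟨z, huU, ?_⟩)
    rintro ⟨v, hv, hvu⟩
    exact (hmin v ⟨u, hq hu, hvu⟩).not_gt hv
  have := hconn.dist_triangle (u := x) (v := z) (w := y)
  rcases lt_or_ge r' (G.dist z x) with hx | hx
  · refine hno_escape x hx (γ.takeUntil w hw).reverse ?_
    simpa using γ.support_takeUntil_subset_support hw
  · refine hno_escape y ?_ (γ.dropUntil w hw) (γ.support_dropUntil_subset_support hw)
    rw [SimpleGraph.dist_comm] at hx
    omega

/-- Shattering by randomized separators. Suppose that for each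
vertex `x` of a locally finite connected graph `G` a set
`U x ⊆ B_G(x,r') \ B_G(x,r)` is given that separates `x` from `V ∖ B_G(x,r')`,
and let `β` be distinct real labels. With
`Û x = U x \ ⋃_{y : β y < β x} B_G(y,r)` and `W = ⋃_x Û x`, every connected
component of the induced subgraph `G[V ∖ W]` has diameter at most `2r'` in
`dist_G`. -/
theorem separator_shattering {V : Type*} (G : SimpleGraph V) (hconn : G.Connected)
    (hlf : ∀ v : V, (G.neighborSet v).Finite) (r r' : ℕ)
    (U : V → Set V)
    (hUsub : ∀ x, U x ⊆ {y | G.dist x y ≤ r'} \ {y | G.dist x y ≤ r})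
    (hsep : ∀ x y : V, r' < G.dist x y → ∀ p : G.Walk x y, ∃ z ∈ U x, z ∈ p.support)
    (β : V → ℝ) (hβ : Function.Injective β)
    (W : Set V)
    (hW : W = ⋃ x : V, (U x \ {z | ∃ y, β y < β x ∧ G.dist y z ≤ r})) :
    ∀ x y : ↥(Wᶜ), (G.induce (Wᶜ : Set V)).Reachable x y →
      G.dist x.val y.val ≤ 2 * r' :=
  separator_shattering_general G hconn hlf r r' U hUsub hsep β W hW
end
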